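/- Bound relating sums: if f_i ≥ 1 for all i and P ∈ (0,1), then ∑_i f_i·P·(1-P)^{f_i-1} ≤ (P/((1-P)·e·(−log(1-P))))·n, i.e., the expected number of singleton elements among n distinct elements is at most n·P / ((1-P)·e·(−log(1-P))). -/
import Mathlib

lemma aux_xe (y : ℝ) : y * Real.exp (-y) ≤ Real.exp (-1) := by
  have h : y ≤ Real.exp (y - 1) := by
    have := Real.add_one_le_exp (y - 1); linarith
  calc y * Real.exp (-y) ≤ Real.exp (y - 1) * Real.exp (-y) :=
        mul_le_mul_of_nonneg_right h (Real.exp_pos _).le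
    _ = Real.exp (-1) := by rw [← Real.exp_add]; ring_nf

/-- With `n` distinct elements of integer frequencies `f i ≥ 1` and sampling rate
`P ∈ (0,1)`, the expected number of singleton elements satisfies
`∑ i, f i·P·(1-P)^(f i - 1) ≤ n·P / ((1-P)·e·(−log(1-P)))`. -/
theorem stmt_16 (n : ℕ) (f : Fin n → ℕ) (hf : ∀ i, 1 ≤ f i)
    (P : ℝ) (hP0 : 0 < P) (hP1 : P < 1) :
    ∑ i, (f i : ℝ) * P * (1 - P) ^ (f i - 1)
      ≤ (P / ((1 - P) * Real.exp 1 * (-Real.log (1 - P)))) * n := by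
  have hq0 : (0:ℝ) < 1 - P := by linarith
  have hq1 : (1:ℝ) - P < 1 := by linarith
  set L : ℝ := -Real.log (1 - P) with hL
  have hLpos : 0 < L := by
    have := Real.log_neg hq0 hq1; simp only [hL]; linarith
  have hel : 0 < Real.exp 1 * L := mul_pos (Real.exp_pos 1) hLpos
  have key : ∀ i, (f i : ℝ) * P * (1 - P) ^ (f i - 1)
      ≤ P / ((1 - P) * Real.exp 1 * L) := by
    intro i
    have hfi : 1 ≤ f i := hf i
    have hfpos : (0:ℝ) < (f i : ℝ) := by exact_mod_cast hfi
    set y : ℝ := (f i : ℝ) * L with hy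
    have hpow : (1 - P) ^ (f i) = Real.exp (-y) := by
      rw [← Real.exp_log (pow_pos hq0 (f i)), Real.log_pow]
      congr 1
      simp only [hy, hL]; ring
    have hsplit : (1 - P) ^ (f i) = (1 - P) ^ (f i - 1) * (1 - P) := by
      rw [← pow_succ]; congr 1; omega
    have hkey : (f i : ℝ) * (1 - P) ^ (f i) ≤ 1 / (Real.exp 1 * L) := by
      rw [hpow]
      calc (f i : ℝ) * Real.exp (-y) = y * Real.exp (-y) / L := by
            rw [hy]; field_simp
        _ ≤ Real.exp (-1) / L := by gcongr; exact aux_xe y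
        _ = 1 / (Real.exp 1 * L) := by rw [Real.exp_neg]; field_simp
    have hpow1 : (f i : ℝ) * (1 - P) ^ (f i - 1) ≤ 1 / ((1 - P) * Real.exp 1 * L) := by
      rw [le_div_iff₀ (by positivity)]
      calc (f i : ℝ) * (1 - P) ^ (f i - 1) * ((1 - P) * Real.exp 1 * L)
          = ((f i : ℝ) * ((1 - P) ^ (f i - 1) * (1 - P))) * (Real.exp 1 * L) := by ring
        _ = ((f i : ℝ) * (1 - P) ^ (f i)) * (Real.exp 1 * L) := by rw [← hsplit]
        _ ≤ (1 / (Real.exp 1 * L)) * (Real.exp 1 * L) :=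
            mul_le_mul_of_nonneg_right hkey hel.le
        _ = 1 := by field_simp
    calc (f i : ℝ) * P * (1 - P) ^ (f i - 1)
        = P * ((f i : ℝ) * (1 - P) ^ (f i - 1)) := by ring
      _ ≤ P * (1 / ((1 - P) * Real.exp 1 * L)) :=
          mul_le_mul_of_nonneg_left hpow1 hP0.le
      _ = P / ((1 - P) * Real.exp 1 * L) := by ring
  calc ∑ i, (f i : ℝ) * P * (1 - P) ^ (f i - 1)
      ≤ ∑ _i : Fin n, P / ((1 - P) * Real.exp 1 * L) :=
        Finset.sum_le_sum fun i _ => key i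
    _ = (P / ((1 - P) * Real.exp 1 * L)) * n := by
        simp [Finset.sum_const, mul_comm]
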